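/- Let G be the graph consisting of an even cycle C = v_1 ... v_k (k ≥ 4 even) together with: for each v_i, 3 ≤ i ≤ k, a triangle complete to v_i; a triangle complete to v_1 and a triangle complete to v_2; and two adjacent vertices s, s' each adjacent to both v_1 and v_2; all these attachment sets pairwise anticomplete. Then G is not a contact B0-VPG graph. -/

import Mathlib

/-- An axis-parallel nontrivial segment on the grid: `horiz` tells its direction,
`coord` is the fixed coordinate (the `y`-coordinate if horizontal, the `x`-coordinate
if vertical) and `[lo, hi]` (with `lo < hi`, i.e. the segment is nontrivial) is the
interval spanned by the varying coordinate. -/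
structure GridSeg where
  horiz : Bool
  coord : ℤ
  lo : ℤ
  hi : ℤ
  lt : lo < hi

namespace GridSeg

/-- The set of points (in the real plane) of a grid segment. -/
def pts (s : GridSeg) : Set (ℝ × ℝ) :=
  if s.horiz then {p | p.2 = (s.coord : ℝ) ∧ (s.lo : ℝ) ≤ p.1 ∧ p.1 ≤ (s.hi : ℝ)}
  else {p | p.1 = (s.coord : ℝ) ∧ (s.lo : ℝ) ≤ p.2 ∧ p.2 ≤ (s.hi : ℝ)}

/-- The interior of a grid segment. -/
def interior (s : GridSeg) : Set (ℝ × ℝ) :=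
  if s.horiz then {p | p.2 = (s.coord : ℝ) ∧ (s.lo : ℝ) < p.1 ∧ p.1 < (s.hi : ℝ)}
  else {p | p.1 = (s.coord : ℝ) ∧ (s.lo : ℝ) < p.2 ∧ p.2 < (s.hi : ℝ)}

/-- The two endpoints of a grid segment. -/
def ends (s : GridSeg) : Set (ℝ × ℝ) :=
  if s.horiz then {((s.lo : ℝ), (s.coord : ℝ)), ((s.hi : ℝ), (s.coord : ℝ))}
  else {((s.coord : ℝ), (s.lo : ℝ)), ((s.coord : ℝ), (s.hi : ℝ))}

/-- Two segments touch if they share a point which is an endpoint of at least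
one of the two segments. -/
def Touch (s t : GridSeg) : Prop :=
  ∃ p : ℝ × ℝ, p ∈ s.pts ∧ p ∈ t.pts ∧ (p ∈ s.ends ∨ p ∈ t.ends)

end GridSeg

/-- `f` is a contact B₀-VPG representation of `G`: the segments of distinct vertices are
interiorly disjoint, and two distinct vertices are adjacent iff their segments touch. -/
def IsB0Rep {V : Type*} (G : SimpleGraph V) (f : V → GridSeg) : Prop :=
  (∀ v w : V, v ≠ w → Disjoint (GridSeg.interior (f v)) (GridSeg.interior (f w))) ∧
  (∀ v w : V, v ≠ w → (G.Adj v w ↔ GridSeg.Touch (f v) (f w)))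

/-- A graph is contact B₀-VPG if it admits a contact B₀-VPG representation. -/
def ContactB0VPG {V : Type*} (G : SimpleGraph V) : Prop :=
  ∃ f : V → GridSeg, IsB0Rep G f

/-- Cyclic shift: the element `i + m (mod k)` of `Fin k`. -/
def cycShift {k : ℕ} (i : Fin k) (m : ℕ) : Fin k :=
  i + ⟨m % k, Nat.mod_lt m (Nat.lt_of_le_of_lt (Nat.zero_le i.1) i.isLt)⟩

/-- `c` lists the vertices of an induced cycle (a hole, when `k ≥ 4`) of `G`, in cyclic
order: `c` is injective and two of its vertices are adjacent iff they are consecutive. -/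
def IsInducedCycle {V : Type*} (G : SimpleGraph V) {k : ℕ} (c : Fin k → V) : Prop :=
  Function.Injective c ∧
    ∀ i j : Fin k, G.Adj (c i) (c j) ↔ (i ≠ j ∧ (i = cycShift j 1 ∨ j = cycShift i 1))

/-- The graph made of a `k`-cycle `v_1 … v_k` together with, for each `i`, `t i` pairwise
anticomplete triangles complete to `v_i` (and anticomplete to the rest of the graph).
Vertices: `Sum.inl i` is the cycle vertex `v_i`; `Sum.inr ⟨i, a, x⟩` is the `x`-th vertex
of the `a`-th triangle attached to `v_i`. -/
def cycleWithTriangles (k : ℕ) (t : Fin k → ℕ) :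
    SimpleGraph (Fin k ⊕ Σ i : Fin k, Fin (t i) × Fin 3) where
  Adj a b :=
    match a, b with
    | Sum.inl i, Sum.inl j => i ≠ j ∧ (i = cycShift j 1 ∨ j = cycShift i 1)
    | Sum.inl i, Sum.inr x => i = x.1
    | Sum.inr x, Sum.inl i => i = x.1
    | Sum.inr x, Sum.inr y => x.1 = y.1 ∧ x.2.1.1 = y.2.1.1 ∧ x.2.2 ≠ y.2.2
  symm := by
    constructor
    rintro (i | x) (j | y) h
    · exact ⟨h.1.symm, h.2.symm⟩
    · exact h
    · exact h
    · exact ⟨h.1.symm, h.2.1.symm, h.2.2.symm⟩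
  loopless := by
    constructor
    rintro (i | x) h
    · exact h.1 rfl
    · exact h.2.2 rfl

/-- The family `F₅`: an even cycle `v_1 … v_k` where every cycle vertex carries one
triangle complete to it, together with two adjacent extra vertices `s, s'` (the set
`S₁`, given by `Sum.inr`), both adjacent to `v_1` and `v_2` (indices `0` and `1`);
all attachment sets pairwise anticomplete. -/
def F5graph (k : ℕ) :
    SimpleGraph ((Fin k ⊕ Σ i : Fin k, Fin 1 × Fin 3) ⊕ Fin 2) where
  Adj a b :=
    match a, b with
    | Sum.inl x, Sum.inl y => (cycleWithTriangles k (fun _ => 1)).Adj x y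
    | Sum.inl (Sum.inl i), Sum.inr _ => i.1 = 0 ∨ i.1 = 1
    | Sum.inr _, Sum.inl (Sum.inl i) => i.1 = 0 ∨ i.1 = 1
    | Sum.inr s, Sum.inr s' => s ≠ s'
    | _, _ => False
  symm := by
    constructor
    rintro ((i | u) | s) ((j | v) | s') h <;>
      first | exact h | exact h.symm | exact h.elim
  loopless := by
    constructor
    rintro ((i | u) | s) h
    · exact (cycleWithTriangles k (fun _ => 1)).loopless.irrefl _ h
    · exact (cycleWithTriangles k (fun _ => 1)).loopless.irrefl _ h
    · exact h rfl

/-!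
At a point of the plane a grid segment leaves in at least one of the four axis directions, in
two if the point is interior to it, and segments with disjoint interiors leave a common point
in different directions. So the four segments of a 4-clique, which meet at a common point by
Helly's property of boxes, all end there, and no fifth segment passes through it. Hence each
cycle vertex `v_i` has an endpoint lying only on its triangle, and `v_1, v_2` share an
endpoint lying only on `s, s'`. Both endpoints of `v_2` therefore miss `v_3`, so `v_3` touches
`v_2` with an endpoint interior to `v_2`, which misses the non-neighbour `v_4` of `v_2`; thus
both endpoints of `v_3` miss `v_4`. Going around the cycle, both endpoints of `v_1` miss
`v_2`, which contradicts their common endpoint.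
-/

open Finset

namespace GridSeg

def lower (s : GridSeg) : ℝ × ℝ := if s.horiz then (s.lo, s.coord) else (s.coord, s.lo)

def upper (s : GridSeg) : ℝ × ℝ := if s.horiz then (s.hi, s.coord) else (s.coord, s.hi)

lemma lo_lt_hi (s : GridSeg) : (s.lo : ℝ) < s.hi := Int.cast_lt.2 s.lt

lemma pts_eq_Icc (s : GridSeg) : s.pts = Set.Icc s.lower s.upper := by
  have := s.lo_lt_hi
  ext ⟨x, y⟩
  unfold pts lower upper
  split_ifs <;> simp only [Set.mem_ofPred_eq, Set.mem_Icc, Prod.mk_le_mk] <;> grind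

lemma ends_eq (s : GridSeg) : s.ends = {s.lower, s.upper} := by
  unfold ends lower upper
  split_ifs <;> rfl

lemma lower_mem_ends (s : GridSeg) : s.lower ∈ s.ends := by simp [ends_eq]

lemma mem_pts_iff (s : GridSeg) {p : ℝ × ℝ} : p ∈ s.pts ↔ p ∈ s.ends ∨ p ∈ s.interior := by
  have := s.lo_lt_hi
  obtain ⟨x, y⟩ := p
  unfold pts ends GridSeg.interior
  split_ifs <;> simp only [Set.mem_ofPred_eq, Set.mem_insert_iff, Set.mem_singleton_iff,
    Prod.mk.injEq] <;> grind

lemma ends_subset_pts (s : GridSeg) : s.ends ⊆ s.pts := fun _ hp => s.mem_pts_iff.2 (.inl hp)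

lemma interior_subset_pts (s : GridSeg) : s.interior ⊆ s.pts :=
  fun _ hp => s.mem_pts_iff.2 (.inr hp)

lemma ends_eq_pair (s : GridSeg) {a b : ℝ × ℝ} (ha : a ∈ s.ends) (hb : b ∈ s.ends)
    (hab : a ≠ b) : s.ends = {a, b} := by
  rw [ends_eq] at ha hb ⊢
  simp only [Set.mem_insert_iff, Set.mem_singleton_iff] at ha hb
  rcases ha with rfl | rfl <;> rcases hb with rfl | rfl
  all_goals first | exact absurd rfl hab | rfl | exact Set.pair_comm _ _

/-- Helly's property of boxes: the supremum of the lower corners is a common point. -/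
lemma exists_mem_pts_of_pairwise_meet {ι : Type*} {T : Finset ι} (hT : T.Nonempty)
    (s : ι → GridSeg) (h : (T : Set ι).Pairwise fun i j => ((s i).pts ∩ (s j).pts).Nonempty) :
    ∃ p, ∀ i ∈ T, p ∈ (s i).pts := by
  have lower_le_upper : ∀ i ∈ T, ∀ j ∈ T, (s j).lower ≤ (s i).upper := by
    intro i hi j hj
    rcases eq_or_ne i j with rfl | hij
    · have := (s i).ends_subset_pts (s i).lower_mem_ends
      rw [pts_eq_Icc] at this
      exact this.2
    · obtain ⟨p, hpi, hpj⟩ := h hi hj hij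
      rw [pts_eq_Icc] at hpi hpj
      exact hpj.1.trans hpi.2
  refine ⟨T.sup' hT fun j => (s j).lower, fun i hi => ?_⟩
  rw [pts_eq_Icc]
  exact ⟨le_sup' (fun j => (s j).lower) hi, sup'_le hT _ (lower_le_upper i hi)⟩

def along (s : GridSeg) (p : ℝ × ℝ) : ℝ := if s.horiz then p.1 else p.2

/-- The directions `(horizontal, forward)` in which `s` leaves the point `p`. -/
noncomputable def dirs (s : GridSeg) (p : ℝ × ℝ) : Finset (Bool × Bool) :=
  univ.filter fun d => d.1 = s.horiz ∧
    (d.2 = true ∧ s.along p < s.hi ∨ d.2 = false ∧ (s.lo : ℝ) < s.along p)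

lemma along_mem_Icc {s : GridSeg} {p : ℝ × ℝ} (hp : p ∈ s.pts) :
    (s.lo : ℝ) ≤ s.along p ∧ s.along p ≤ s.hi := by
  unfold pts at hp; unfold along
  split_ifs at hp ⊢ <;> exact hp.2

lemma along_mem_Ioo {s : GridSeg} {p : ℝ × ℝ} (hp : p ∈ s.interior) :
    (s.lo : ℝ) < s.along p ∧ s.along p < s.hi := by
  unfold GridSeg.interior at hp; unfold along
  split_ifs at hp ⊢ <;> exact hp.2

lemma one_le_card_dirs {s : GridSeg} {p : ℝ × ℝ} (hp : p ∈ s.pts) : 1 ≤ #(s.dirs p) := by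
  obtain ⟨hlo, hhi⟩ := along_mem_Icc hp
  rw [Nat.one_le_iff_ne_zero, Ne, card_eq_zero, ← Ne, ← nonempty_iff_ne_empty]
  rcases hhi.lt_or_eq with hlt | heq
  · exact ⟨(s.horiz, true), by simp [dirs, hlt]⟩
  · exact ⟨(s.horiz, false), by simp [dirs, heq, s.lo_lt_hi]⟩

lemma two_le_card_dirs {s : GridSeg} {p : ℝ × ℝ} (hp : p ∈ s.interior) : 2 ≤ #(s.dirs p) := by
  obtain ⟨hlo, hhi⟩ := along_mem_Ioo hp
  calc 2 = #{(s.horiz, true), (s.horiz, false)} := by simp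
    _ ≤ #(s.dirs p) := card_le_card (by simp [insert_subset_iff, dirs, hlo, hhi])

lemma not_disjoint_interior {s t : GridSeg} {p : ℝ × ℝ} (hs : p ∈ s.pts) (ht : p ∈ t.pts)
    (h : s.horiz = t.horiz) {x : ℝ} (hxs : (s.lo : ℝ) < x ∧ x < s.hi)
    (hxt : (t.lo : ℝ) < x ∧ x < t.hi) : ¬ Disjoint s.interior t.interior := by
  rw [Set.not_disjoint_iff]
  unfold pts at hs ht; unfold GridSeg.interior
  cases hh : s.horiz <;> simp only [hh, ← h] at hs ht ⊢
  · exact ⟨(p.1, x), ⟨hs.1, hxs⟩, ⟨ht.1, hxt⟩⟩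
  · exact ⟨(x, p.2), ⟨hs.1, hxs⟩, ⟨ht.1, hxt⟩⟩

lemma disjoint_dirs {s t : GridSeg} {p : ℝ × ℝ} (hs : p ∈ s.pts) (ht : p ∈ t.pts)
    (hd : Disjoint s.interior t.interior) : Disjoint (s.dirs p) (t.dirs p) := by
  rw [disjoint_left]
  rintro ⟨h, b⟩ hds hdt
  simp only [dirs, mem_filter, mem_univ, true_and] at hds hdt
  obtain ⟨rfl, hds⟩ := hds
  obtain ⟨hst, hdt⟩ := hdt
  have hal : t.along p = s.along p := by simp [along, hst]
  rw [hal] at hdt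
  have hs' := along_mem_Icc hs
  have ht' := along_mem_Icc ht
  rw [hal] at ht'
  obtain ⟨x, hx⟩ : ∃ x, ((s.lo : ℝ) < x ∧ x < s.hi) ∧ ((t.lo : ℝ) < x ∧ x < t.hi) := by
    cases b
    · obtain ⟨x, hx1, hx2⟩ := exists_between (max_lt (hds.resolve_left (by simp)).2
        (hdt.resolve_left (by simp)).2)
      exact ⟨x, ⟨(le_max_left _ _).trans_lt hx1, hx2.trans_le hs'.2⟩,
        ⟨(le_max_right _ _).trans_lt hx1, hx2.trans_le ht'.2⟩⟩
    · obtain ⟨x, hx1, hx2⟩ := exists_between (lt_min (hds.resolve_right (by simp)).2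
        (hdt.resolve_right (by simp)).2)
      exact ⟨x, ⟨hs'.1.trans_lt hx1, hx2.trans_le (min_le_left _ _)⟩,
        ⟨ht'.1.trans_lt hx1, hx2.trans_le (min_le_right _ _)⟩⟩
  exact not_disjoint_interior hs ht hst hx.1 hx.2 hd

section Pencil

variable {ι : Type*} {T : Finset ι} {s : ι → GridSeg} {p : ℝ × ℝ}

lemma sum_card_dirs_le_four (hp : ∀ i ∈ T, p ∈ (s i).pts)
    (hd : (T : Set ι).Pairwise fun i j => Disjoint (s i).interior (s j).interior) :
    ∑ i ∈ T, #((s i).dirs p) ≤ 4 := by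
  classical
  rw [← card_biUnion fun i hi j hj hij => disjoint_dirs (hp i hi) (hp j hj) (hd hi hj hij)]
  exact (card_le_univ _).trans (by simp)

lemma card_le_four (hp : ∀ i ∈ T, p ∈ (s i).pts)
    (hd : (T : Set ι).Pairwise fun i j => Disjoint (s i).interior (s j).interior) : #T ≤ 4 :=
  calc #T = ∑ _ ∈ T, 1 := by simp
    _ ≤ ∑ i ∈ T, #((s i).dirs p) := sum_le_sum fun i hi => one_le_card_dirs (hp i hi)
    _ ≤ 4 := sum_card_dirs_le_four hp hd

lemma mem_ends_of_card_eq_four (hp : ∀ i ∈ T, p ∈ (s i).pts)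
    (hd : (T : Set ι).Pairwise fun i j => Disjoint (s i).interior (s j).interior)
    (hT : #T = 4) {i : ι} (hi : i ∈ T) : p ∈ (s i).ends := by
  classical
  refine ((s i).mem_pts_iff.1 (hp i hi)).resolve_right fun hint => ?_
  have := sum_card_dirs_le_four hp hd
  rw [← add_sum_erase T _ hi] at this
  have hrest : #(T.erase i) ≤ ∑ j ∈ T.erase i, #((s j).dirs p) := by
    simpa using sum_le_sum fun j hj => one_le_card_dirs (hp j (mem_of_mem_erase hj))
  have := two_le_card_dirs hint
  rw [card_erase_of_mem hi, hT] at hrest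
  omega

end Pencil

end GridSeg

namespace IsB0Rep

variable {V : Type*} {G : SimpleGraph V} {f : V → GridSeg}

lemma pairwise_disjoint_interior (hf : IsB0Rep G f) (S : Set V) :
    S.Pairwise fun v w => Disjoint (f v).interior (f w).interior :=
  fun v _ w _ hvw => hf.1 v w hvw

lemma exists_common_end_of_isNClique (hf : IsB0Rep G f) {S : Finset V} (hS : G.IsNClique 4 S) :
    ∃ p, (∀ v ∈ S, p ∈ (f v).ends) ∧ ∀ w ∉ S, p ∉ (f w).pts := by
  classical
  obtain ⟨p, hp⟩ := GridSeg.exists_mem_pts_of_pairwise_meet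
    (card_pos.1 (by rw [hS.card_eq]; norm_num)) f fun v hv w hw hvw => by
      obtain ⟨q, hqv, hqw, -⟩ := (hf.2 v w hvw).1 (hS.isClique hv hw hvw)
      exact ⟨q, hqv, hqw⟩
  refine ⟨p, fun v hv => GridSeg.mem_ends_of_card_eq_four hp
    (hf.pairwise_disjoint_interior _) hS.card_eq hv, fun w hw hpw => ?_⟩
  have := GridSeg.card_le_four (T := insert w S) (s := f)
    (by simpa only [mem_insert, forall_eq_or_imp] using ⟨hpw, hp⟩)
    (hf.pairwise_disjoint_interior _)
  rw [card_insert_of_notMem hw, hS.card_eq] at this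
  omega

lemma not_mem_pts_of_mem_interior (hf : IsB0Rep G f) {u w : V} (hne : u ≠ w)
    (hadj : ¬ G.Adj u w) {p : ℝ × ℝ} (hp : p ∈ (f u).interior) : p ∉ (f w).pts := by
  intro hpw
  rcases (f w).mem_pts_iff.1 hpw with hend | hint
  · exact hadj ((hf.2 u w hne).2 ⟨p, (f u).interior_subset_pts hp, hpw, .inr hend⟩)
  · exact Set.disjoint_left.1 (hf.1 u w hne) hp hint

/-- The contact point of `f a` and `f b` is an endpoint of `f b` interior to `f a`, hence
off `f c`. -/
lemma disjoint_ends_pts_of_path (hf : IsB0Rep G f) {a b c : V} (hab : G.Adj a b)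
    (hac : a ≠ c) (hnac : ¬ G.Adj a c) {e : ℝ × ℝ} (he : e ∈ (f b).ends)
    (hea : e ∉ (f a).pts) (hec : e ∉ (f c).pts) (h : Disjoint (f a).ends (f b).pts) :
    Disjoint (f b).ends (f c).pts := by
  obtain ⟨t, hta, htb, hte⟩ := (hf.2 a b hab.ne).1 hab
  have hta_end : t ∉ (f a).ends := fun ht => Set.disjoint_left.1 h ht htb
  have htb_end : t ∈ (f b).ends := hte.resolve_left hta_end
  have hta_int : t ∈ (f a).interior := ((f a).mem_pts_iff.1 hta).resolve_left hta_end
  rw [(f b).ends_eq_pair he htb_end (by rintro rfl; exact hea hta), Set.disjoint_insert_left,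
    Set.disjoint_singleton_left]
  exact ⟨hec, hf.not_mem_pts_of_mem_interior hac hnac hta_int⟩

lemma disjoint_ends_pts_of_le (hf : IsB0Rep G f) {c : ℕ → V} {e : ℕ → ℝ × ℝ}
    (hadj : ∀ n, G.Adj (c n) (c (n + 1))) (hne : ∀ n, c n ≠ c (n + 2))
    (hnadj : ∀ n, ¬ G.Adj (c n) (c (n + 2))) (he : ∀ n, e n ∈ (f (c n)).ends)
    (hprev : ∀ n, e (n + 1) ∉ (f (c n)).pts) (hnext : ∀ n, e n ∉ (f (c (n + 1))).pts)
    {m n : ℕ} (hmn : m ≤ n) (hm : Disjoint (f (c m)).ends (f (c (m + 1))).pts) :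
    Disjoint (f (c n)).ends (f (c (n + 1))).pts := by
  induction n, hmn using Nat.le_induction with
  | base => exact hm
  | succ n _ ih =>
    exact hf.disjoint_ends_pts_of_path (hadj n) (hne n) (hnadj n) (he (n + 1)) (hprev n)
      (hnext (n + 1)) ih

end IsB0Rep

namespace F5graph

open SimpleGraph Fin.NatCast

variable {k : ℕ} [NeZero k]

/-- The cycle vertex `v_{n+1}`, with `n` read modulo `k`. -/
def cyc (n : ℕ) : (Fin k ⊕ Σ _ : Fin k, Fin 1 × Fin 3) ⊕ Fin 2 := .inl (.inl (n : Fin k))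

def triangleClique (n : ℕ) : Finset ((Fin k ⊕ Σ _ : Fin k, Fin 1 × Fin 3) ⊕ Fin 2) :=
  {cyc n, .inl (.inr ⟨(n : Fin k), 0, 0⟩), .inl (.inr ⟨(n : Fin k), 0, 1⟩),
    .inl (.inr ⟨(n : Fin k), 0, 2⟩)}

def sClique : Finset ((Fin k ⊕ Σ _ : Fin k, Fin 1 × Fin 3) ⊕ Fin 2) :=
  {cyc 0, cyc 1, .inr 0, .inr 1}

lemma cyc_self : cyc (k := k) k = cyc 0 := by simp [cyc]

lemma cyc_self_add_one : cyc (k := k) (k + 1) = cyc 1 := by simp [cyc]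

lemma cycShift_one (i : Fin k) : cycShift i 1 = i + 1 := rfl

lemma adj_cyc_iff {m n : ℕ} :
    (F5graph k).Adj (cyc m) (cyc n) ↔
      cyc (k := k) m ≠ cyc n ∧ ((m : Fin k) = (n : Fin k) + 1 ∨ (n : Fin k) = (m : Fin k) + 1) := by
  simp [cyc, F5graph, cycleWithTriangles, cycShift_one]

lemma adj_cyc_succ (hk : 2 ≤ k) (n : ℕ) : (F5graph k).Adj (cyc n) (cyc (n + 1)) := by
  have : (1 : Fin k) ≠ 0 := by simp [Fin.ext_iff, Nat.mod_eq_of_lt hk]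
  rw [adj_cyc_iff]
  simp [cyc, this]

lemma cyc_ne_cyc_add_two (hk : 3 ≤ k) (n : ℕ) : cyc (k := k) n ≠ cyc (n + 2) := by
  have : (2 : Fin k) ≠ 0 := by simp [Fin.ext_iff, Nat.mod_eq_of_lt (show 2 < k by omega)]
  simp [cyc, this]

lemma not_adj_cyc_add_two (hk : 4 ≤ k) (n : ℕ) : ¬ (F5graph k).Adj (cyc n) (cyc (n + 2)) := by
  have h1 : 1 % k = 1 := Nat.mod_eq_of_lt (by omega)
  have h2 : 2 % k = 2 := Nat.mod_eq_of_lt (by omega)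
  have h3 : (2 + 1 : Fin k) ≠ 0 := by simp [Fin.ext_iff, Fin.val_add, h1, h2, Nat.mod_eq_of_lt hk]
  have h21 : (2 : Fin k) ≠ 1 := by simp [Fin.ext_iff, h1, h2]
  rw [adj_cyc_iff]
  simp [cyc, add_assoc, h21, h3]

lemma isNClique_triangleClique (n : ℕ) : (F5graph k).IsNClique 4 (triangleClique n) :=
  IsNClique.insert (is3Clique_triple_iff.2 ⟨⟨rfl, rfl, by simp⟩, ⟨rfl, rfl, by simp⟩,
    ⟨rfl, rfl, by simp⟩⟩) (by simp [cyc, F5graph, cycleWithTriangles])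

lemma isNClique_sClique (hk : 2 ≤ k) : (F5graph k).IsNClique 4 (sClique (k := k)) := by
  have h1 : ((1 : ℕ) : Fin k).val = 1 := by simp [Nat.mod_eq_of_lt hk]
  refine IsNClique.insert (is3Clique_triple_iff.2 ⟨.inr h1, .inr h1, by simp [F5graph]⟩) ?_
  simp only [mem_insert, mem_singleton, forall_eq_or_imp, forall_eq]
  exact ⟨adj_cyc_succ hk 0, .inl (by simp), .inl (by simp)⟩

lemma cyc_mem_triangleClique {m n : ℕ} :
    cyc (k := k) m ∈ triangleClique n ↔ cyc (k := k) m = cyc n := by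
  simp [triangleClique, cyc]

lemma cyc_mem_sClique {m : ℕ} : cyc (k := k) m ∈ sClique ↔
    cyc (k := k) m = cyc 0 ∨ cyc (k := k) m = cyc 1 := by
  simp [sClique, cyc]

end F5graph

open F5graph in
theorem F5_not_contactB0VPG_general (k : ℕ) (hk : 4 ≤ k) :
    ¬ ContactB0VPG (F5graph k) := by
  rintro ⟨f, hf⟩
  have : NeZero k := ⟨by omega⟩
  choose P hPends hPoff using fun n => hf.exists_common_end_of_isNClique
    (isNClique_triangleClique (k := k) n)
  obtain ⟨q, hqends, hqoff⟩ :=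
    hf.exists_common_end_of_isNClique (isNClique_sClique (k := k) (by omega))
  have hadj := adj_cyc_succ (k := k) (by omega)
  have hPcyc : ∀ n, P n ∈ (f (cyc n)).ends := fun n => hPends n _ (cyc_mem_triangleClique.2 rfl)
  have hprev : ∀ n, P (n + 1) ∉ (f (cyc n)).pts :=
    fun n => hPoff _ _ (cyc_mem_triangleClique.not.2 (hadj n).ne)
  have hnext : ∀ n, P n ∉ (f (cyc (n + 1))).pts :=
    fun n => hPoff _ _ (cyc_mem_triangleClique.not.2 (hadj n).ne')
  have hq0 : q ∈ (f (cyc 0)).ends := hqends _ (cyc_mem_sClique.2 (.inl rfl))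
  have hq1 : q ∈ (f (cyc 1)).ends := hqends _ (cyc_mem_sClique.2 (.inr rfl))
  have hq2 : q ∉ (f (cyc 2)).pts := hqoff _ <| cyc_mem_sClique.not.2 <| not_or.2
    ⟨(cyc_ne_cyc_add_two (by omega) 0).symm, (hadj 1).ne'⟩
  have hstart : Disjoint (f (cyc 1)).ends (f (cyc 2)).pts := by
    rw [(f _).ends_eq_pair (hPcyc 1) hq1 fun h => hprev 0 (h ▸ (f _).ends_subset_pts hq0),
      Set.disjoint_insert_left, Set.disjoint_singleton_left]
    exact ⟨hnext 1, hq2⟩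
  have hend := hf.disjoint_ends_pts_of_le hadj (cyc_ne_cyc_add_two (by omega))
    (not_adj_cyc_add_two hk) hPcyc hprev hnext (by omega : 1 ≤ k) hstart
  rw [cyc_self, cyc_self_add_one] at hend
  exact Set.disjoint_left.1 hend hq0 ((f _).ends_subset_pts hq1)

/-- family `F₅`: an even cycle `v_1 … v_k` (`k ≥ 4`) with a triangle
complete to each cycle vertex, plus two adjacent vertices `s, s'` each adjacent to both
`v_1` and `v_2`, all attachment sets pairwise anticomplete, is not contact B₀-VPG. -/
theorem F5_not_contactB0VPG (k : ℕ) (hk : 4 ≤ k) (hke : Even k) :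
    ¬ ContactB0VPG (F5graph k) :=
  F5_not_contactB0VPG_general k hk
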